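/- Let $W_{(\xi)} = \xi \psi_{(\xi)} \phi_{(\xi)}$ be an intermittent jet, $V_{(\xi)} = \frac{1}{n_*^2 \lambda^2}\xi\, \psi_{(\xi)} \Phi_{(\xi)}$, and define the corrector $W_{(\xi)}^{(c)} := \frac{1}{n_*^2\lambda^2}\nabla\psi_{(\xi)} \times \mathrm{curl}(\Phi_{(\xi)}\xi)$. Then $W_{(\xi)}^{(c)} = \mathrm{curl}\,\mathrm{curl}\, V_{(\xi)} - W_{(\xi)}$, and hence $\mathrm{div}(W_{(\xi)} + W_{(\xi)}^{(c)}) = 0$. -/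

import Mathlib

open Real

/-- partial derivative in direction `j` of a scalar field on `ℝ³` -/
noncomputable def pd (f : (Fin 3 → ℝ) → ℝ) (j : Fin 3) (x : Fin 3 → ℝ) : ℝ :=
  fderiv ℝ f x (Pi.single j 1)

/-- Euclidean dot product on `ℝ³` -/
def dot3 (u v : Fin 3 → ℝ) : ℝ := ∑ i, u i * v i

/-- curl of a vector field on `ℝ³` -/
noncomputable def curl3 (F : (Fin 3 → ℝ) → Fin 3 → ℝ) (x : Fin 3 → ℝ) : Fin 3 → ℝ :=
  ![pd (fun y => F y 2) 1 x - pd (fun y => F y 1) 2 x,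
    pd (fun y => F y 0) 2 x - pd (fun y => F y 2) 0 x,
    pd (fun y => F y 1) 0 x - pd (fun y => F y 0) 1 x]

/-- cross product on `ℝ³` -/
def cross3 (u v : Fin 3 → ℝ) : Fin 3 → ℝ :=
  ![u 1 * v 2 - u 2 * v 1, u 2 * v 0 - u 0 * v 2, u 0 * v 1 - u 1 * v 0]

section AuxLemmas
set_option linter.deprecated false

noncomputable def dotCLM (v : Fin 3 → ℝ) : (Fin 3 → ℝ) →L[ℝ] ℝ :=
  ∑ i, v i • ContinuousLinearMap.proj i

lemma dotCLM_apply (v x : Fin 3 → ℝ) : dotCLM v x = dot3 x v := by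
  simp [dotCLM, dot3, ContinuousLinearMap.sum_apply, mul_comm]

lemma dotCLM_single (v : Fin 3 → ℝ) (j : Fin 3) : dotCLM v (Pi.single j 1) = v j := by
  rw [dotCLM_apply]; simp [dot3, Pi.single_apply, Finset.sum_ite_eq']

lemma pd_add {f g : (Fin 3 → ℝ) → ℝ} {x : Fin 3 → ℝ} (j : Fin 3)
    (hf : DifferentiableAt ℝ f x) (hg : DifferentiableAt ℝ g x) :
    pd (fun y => f y + g y) j x = pd f j x + pd g j x := by
  simp [pd, fderiv_fun_add hf hg]

lemma pd_sub {f g : (Fin 3 → ℝ) → ℝ} {x : Fin 3 → ℝ} (j : Fin 3)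
    (hf : DifferentiableAt ℝ f x) (hg : DifferentiableAt ℝ g x) :
    pd (fun y => f y - g y) j x = pd f j x - pd g j x := by
  simp [pd, fderiv_fun_sub hf hg]

lemma pd_const_mul {f : (Fin 3 → ℝ) → ℝ} {x : Fin 3 → ℝ} (j : Fin 3) (c : ℝ)
    (hf : DifferentiableAt ℝ f x) :
    pd (fun y => c * f y) j x = c * pd f j x := by
  simp [pd, fderiv_const_mul hf c]

lemma pd_mul {f g : (Fin 3 → ℝ) → ℝ} {x : Fin 3 → ℝ} (j : Fin 3)
    (hf : DifferentiableAt ℝ f x) (hg : DifferentiableAt ℝ g x) :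
    pd (fun y => f y * g y) j x = pd f j x * g x + f x * pd g j x := by
  simp [pd, fderiv_fun_mul hf hg]
  ring

lemma pd_mul_const {f : (Fin 3 → ℝ) → ℝ} {x : Fin 3 → ℝ} (j : Fin 3)
    (hf : DifferentiableAt ℝ f x) (c : ℝ) :
    pd (fun y => f y * c) j x = pd f j x * c := by
  simp only [mul_comm _ c]
  exact pd_const_mul j c hf

lemma hasFDerivAt_line (K C : ℝ) (v x : Fin 3 → ℝ) :
    HasFDerivAt (fun y => K * (dot3 y v + C)) (K • dotCLM v) x := by
  have h2 : (fun y => K * (dot3 y v + C)) = fun y => K * (dotCLM v y) + K * C := by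
    funext y; rw [dotCLM_apply]; ring
  rw [h2]
  simpa using (((dotCLM v).hasFDerivAt.const_mul K).add_const (K * C))

lemma pd_comp_line {h : ℝ → ℝ} (hh : Differentiable ℝ h) (K C : ℝ) (v : Fin 3 → ℝ)
    (j : Fin 3) (x : Fin 3 → ℝ) :
    pd (fun y => h (K * (dot3 y v + C))) j x
      = K * v j * deriv h (K * (dot3 x v + C)) := by
  have hd := (hh (K * (dot3 x v + C))).hasDerivAt
  have h3 := hd.comp_hasFDerivAt x (hasFDerivAt_line K C v x)
  simp only [Function.comp_def] at h3
  rw [pd, h3.fderiv]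
  simp [dotCLM_single]
  ring

lemma diff_comp_line {h : ℝ → ℝ} (hh : Differentiable ℝ h) (K C : ℝ) (v : Fin 3 → ℝ) :
    Differentiable ℝ (fun y => h (K * (dot3 y v + C))) := by
  intro x
  have h3 := ((hh _).hasDerivAt.comp_hasFDerivAt x (hasFDerivAt_line K C v x))
  simp only [Function.comp_def] at h3
  exact h3.differentiableAt

lemma dot3_sub (y c a : Fin 3 → ℝ) : dot3 (y - c) a = dot3 y a - dot3 c a := by
  simp [dot3, sub_mul, Finset.sum_sub_distrib]

lemma hasFDerivAt_aff (K : ℝ) (a c x : Fin 3 → ℝ) :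
    HasFDerivAt (fun y => K * dot3 (y - c) a) (K • dotCLM a) x := by
  have h2 : (fun y => K * dot3 (y - c) a) = fun y => K * (dotCLM a y) + (-(K * dot3 c a)) := by
    funext y; rw [dotCLM_apply, dot3_sub]; ring
  rw [h2]
  simpa using (((dotCLM a).hasFDerivAt.const_mul K).add_const (-(K * dot3 c a)))

lemma pd_comp_aff {h : ℝ × ℝ → ℝ} (hh : Differentiable ℝ h) (K : ℝ) (a b c : Fin 3 → ℝ)
    (j : Fin 3) (x : Fin 3 → ℝ) :
    pd (fun y => h (K * dot3 (y - c) a, K * dot3 (y - c) b)) j x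
      = K * a j * fderiv ℝ h (K * dot3 (x - c) a, K * dot3 (x - c) b) (1, 0)
      + K * b j * fderiv ℝ h (K * dot3 (x - c) a, K * dot3 (x - c) b) (0, 1) := by
  have hF : HasFDerivAt (fun y => (K * dot3 (y - c) a, K * dot3 (y - c) b))
      ((K • dotCLM a).prod (K • dotCLM b)) x :=
    HasFDerivAt.prodMk (hasFDerivAt_aff K a c x) (hasFDerivAt_aff K b c x)
  have hcomp := (hh _).hasFDerivAt.comp x hF
  simp only [Function.comp_def] at hcomp
  rw [pd, hcomp.fderiv]
  simp only [ContinuousLinearMap.coe_comp', Function.comp_apply, ContinuousLinearMap.prod_apply,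
    ContinuousLinearMap.coe_smul', Pi.smul_apply, dotCLM_single, smul_eq_mul]
  have h4 : (K * a j, K * b j) = (K * a j) • ((1:ℝ), (0:ℝ)) + (K * b j) • ((0:ℝ), (1:ℝ)) := by
    simp [Prod.ext_iff]
  rw [h4, map_add, map_smul, map_smul]
  simp [smul_eq_mul]

lemma diff_comp_aff {h : ℝ × ℝ → ℝ} (hh : Differentiable ℝ h) (K : ℝ) (a b c : Fin 3 → ℝ) :
    Differentiable ℝ (fun y => h (K * dot3 (y - c) a, K * dot3 (y - c) b)) := by
  intro x
  have hcomp := (hh _).hasFDerivAt.comp x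
    (HasFDerivAt.prodMk (hasFDerivAt_aff K a c x) (hasFDerivAt_aff K b c x))
  simp only [Function.comp_def] at hcomp
  exact hcomp.differentiableAt

lemma contDiff_deriv_aux {f : ℝ → ℝ} (hf : ContDiff ℝ (⊤ : ℕ∞) f) :
    ContDiff ℝ (⊤ : ℕ∞) (deriv f) :=
  (contDiff_infty_iff_deriv.mp hf).2

lemma contDiff_fderiv_apply_aux {f : ℝ × ℝ → ℝ} (hf : ContDiff ℝ (⊤ : ℕ∞) f) (v : ℝ × ℝ) :
    ContDiff ℝ (⊤ : ℕ∞) (fun p => fderiv ℝ f p v) :=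
  ((ContinuousLinearMap.apply ℝ ℝ v).contDiff.comp (contDiff_infty_iff_fderiv.mp hf).2)

end AuxLemmas

set_option maxHeartbeats 1600000 in
/-- the incompressibility corrector of an intermittent jet satisfies
`W_{(ξ)}^{(c)} = curl curl V_{(ξ)} - W_{(ξ)}`, hence `div (W_{(ξ)} + W_{(ξ)}^{(c)}) = 0`. -/
theorem stmt_10
    (ξ A₁ A₂ αv : Fin 3 → ℝ)
    (hframe : dot3 ξ ξ = 1 ∧ dot3 A₁ A₁ = 1 ∧ dot3 A₂ A₂ = 1 ∧
      dot3 ξ A₁ = 0 ∧ dot3 ξ A₂ = 0 ∧ dot3 A₁ A₂ = 0)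
    (hcrossA : A₂ = cross3 ξ A₁)
    (n_star : ℕ) (hn : 0 < n_star) (lam μ r_perp : ℝ) (hlam : 0 < lam) (hr : 0 < r_perp)
    (ψr : ℝ → ℝ) (hψ : ContDiff ℝ (⊤ : ℕ∞) ψr)
    (Φr : ℝ → ℝ → ℝ) (hΦ : ContDiff ℝ (⊤ : ℕ∞) fun y : ℝ × ℝ => Φr y.1 y.2)
    (ψξ : ℝ → (Fin 3 → ℝ) → ℝ)
    (hψξ : ∀ t x, ψξ t x = ψr ((n_star : ℝ) * r_perp * lam * (dot3 x ξ + μ * t)))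
    (Φξ : (Fin 3 → ℝ) → ℝ)
    (hΦξ : ∀ x, Φξ x = Φr ((n_star : ℝ) * r_perp * lam * dot3 (x - αv) A₁)
                          ((n_star : ℝ) * r_perp * lam * dot3 (x - αv) A₂))
    (φξ : (Fin 3 → ℝ) → ℝ)
    (hφξ : ∀ x, φξ x = -(1 / ((n_star : ℝ) ^ 2 * lam ^ 2)) * ∑ j, pd (fun y => pd Φξ j y) j x)
    (W V Wc : ℝ → (Fin 3 → ℝ) → Fin 3 → ℝ)
    (hW : ∀ t x i, W t x i = ξ i * ψξ t x * φξ x)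
    (hV : ∀ t x i, V t x i = (1 / ((n_star : ℝ) ^ 2 * lam ^ 2)) * ξ i * ψξ t x * Φξ x)
    (hWc : ∀ t x, Wc t x = (1 / ((n_star : ℝ) ^ 2 * lam ^ 2)) •
      cross3 (fun i => pd (ψξ t) i x) (curl3 (fun y i => Φξ y * ξ i) x)) :
    (∀ t x i, Wc t x i = curl3 (fun y => curl3 (V t) y) x i - W t x i) ∧
    (∀ t x, ∑ i, pd (fun y => W t y i + Wc t y i) i x = 0) := by
  obtain ⟨hfξ, hfA1, hfA2, hfξA1, hfξA2, hfA12⟩ := hframe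
  set K : ℝ := (n_star : ℝ) * r_perp * lam with hK
  set cc : ℝ := 1 / ((n_star : ℝ) ^ 2 * lam ^ 2) with hcc
  set G : ℝ × ℝ → ℝ := fun p => Φr p.1 p.2 with hGdef
  have hle1 : (1 : WithTop ℕ∞) ≤ ((⊤ : ℕ∞) : WithTop ℕ∞) := by exact_mod_cast le_top
  have hGinf : ContDiff ℝ (⊤ : ℕ∞) G := hΦ.of_le (by simp)
  have hpsinf : ContDiff ℝ (⊤ : ℕ∞) ψr := hψ.of_le (by simp)
  have hψd : Differentiable ℝ ψr := hpsinf.differentiable (by simp)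
  have hψ'c : ContDiff ℝ (⊤ : ℕ∞) (deriv ψr) := contDiff_deriv_aux hpsinf
  have hψ'd : Differentiable ℝ (deriv ψr) := hψ'c.differentiable (by simp)
  have hdG : Differentiable ℝ G := hGinf.differentiable (by simp)
  set G1 : ℝ × ℝ → ℝ := fun p => fderiv ℝ G p (1, 0) with hG1def
  set G2 : ℝ × ℝ → ℝ := fun p => fderiv ℝ G p (0, 1) with hG2def
  have hG1c : ContDiff ℝ (⊤ : ℕ∞) G1 := contDiff_fderiv_apply_aux hGinf _
  have hG2c : ContDiff ℝ (⊤ : ℕ∞) G2 := contDiff_fderiv_apply_aux hGinf _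
  have hdG1 : Differentiable ℝ G1 := hG1c.differentiable (by simp)
  have hdG2 : Differentiable ℝ G2 := hG2c.differentiable (by simp)
  set φp : ℝ × ℝ → ℝ :=
    fun p => -(cc * K ^ 2) * (fderiv ℝ G1 p (1, 0) + fderiv ℝ G2 p (0, 1)) with hφpdef
  have hdφp : Differentiable ℝ φp := by
    have d1 : Differentiable ℝ (fun p : ℝ × ℝ => fderiv ℝ G1 p (1, 0)) :=
      (contDiff_fderiv_apply_aux hG1c _).differentiable (by simp)
    have d2 : Differentiable ℝ (fun p : ℝ × ℝ => fderiv ℝ G2 p (0, 1)) :=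
      (contDiff_fderiv_apply_aux hG2c _).differentiable (by simp)
    exact (d1.add d2).const_mul _
  set Φf : (Fin 3 → ℝ) → ℝ :=
    fun y => G (K * dot3 (y - αv) A₁, K * dot3 (y - αv) A₂) with hΦfdef
  set Q1 : (Fin 3 → ℝ) → ℝ :=
    fun y => G1 (K * dot3 (y - αv) A₁, K * dot3 (y - αv) A₂) with hQ1def
  set Q2 : (Fin 3 → ℝ) → ℝ :=
    fun y => G2 (K * dot3 (y - αv) A₁, K * dot3 (y - αv) A₂) with hQ2def
  set R11 : (Fin 3 → ℝ) → ℝ :=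
    fun y => fderiv ℝ G1 (K * dot3 (y - αv) A₁, K * dot3 (y - αv) A₂) (1, 0) with hR11def
  set R12 : (Fin 3 → ℝ) → ℝ :=
    fun y => fderiv ℝ G1 (K * dot3 (y - αv) A₁, K * dot3 (y - αv) A₂) (0, 1) with hR12def
  set R21 : (Fin 3 → ℝ) → ℝ :=
    fun y => fderiv ℝ G2 (K * dot3 (y - αv) A₁, K * dot3 (y - αv) A₂) (1, 0) with hR21def
  set R22 : (Fin 3 → ℝ) → ℝ :=
    fun y => fderiv ℝ G2 (K * dot3 (y - αv) A₁, K * dot3 (y - αv) A₂) (0, 1) with hR22def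
  set φf : (Fin 3 → ℝ) → ℝ :=
    fun y => φp (K * dot3 (y - αv) A₁, K * dot3 (y - αv) A₂) with hφfdef
  set f1 : (Fin 3 → ℝ) → ℝ :=
    fun y => fderiv ℝ φp (K * dot3 (y - αv) A₁, K * dot3 (y - αv) A₂) (1, 0) with hf1def
  set f2 : (Fin 3 → ℝ) → ℝ :=
    fun y => fderiv ℝ φp (K * dot3 (y - αv) A₁, K * dot3 (y - αv) A₂) (0, 1) with hf2def
  have hdΦf : Differentiable ℝ Φf := by rw [hΦfdef]; exact diff_comp_aff hdG K A₁ A₂ αv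
  have hdQ1f : Differentiable ℝ Q1 := by rw [hQ1def]; exact diff_comp_aff hdG1 K A₁ A₂ αv
  have hdQ2f : Differentiable ℝ Q2 := by rw [hQ2def]; exact diff_comp_aff hdG2 K A₁ A₂ αv
  have hdφf : Differentiable ℝ φf := by rw [hφfdef]; exact diff_comp_aff hdφp K A₁ A₂ αv
  have hΦe : Φξ = Φf := by
    funext y
    rw [hΦξ y, hΦfdef, hGdef]
  have hpdΦ : ∀ j y, pd Φf j y = K * A₁ j * Q1 y + K * A₂ j * Q2 y := by
    intro j y
    rw [hΦfdef, pd_comp_aff hdG K A₁ A₂ αv j y, hQ1def, hQ2def, hG1def, hG2def]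
  have hpdQ1 : ∀ j y, pd Q1 j y = K * A₁ j * R11 y + K * A₂ j * R12 y := by
    intro j y
    rw [hQ1def, pd_comp_aff hdG1 K A₁ A₂ αv j y, hR11def, hR12def]
  have hpdQ2 : ∀ j y, pd Q2 j y = K * A₁ j * R21 y + K * A₂ j * R22 y := by
    intro j y
    rw [hQ2def, pd_comp_aff hdG2 K A₁ A₂ αv j y, hR21def, hR22def]
  have hpdφf : ∀ j y, pd φf j y = K * A₁ j * f1 y + K * A₂ j * f2 y := by
    intro j y
    rw [hφfdef, pd_comp_aff hdφp K A₁ A₂ αv j y, hf1def, hf2def]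
  have hΦ2 : ∀ j i y, pd (fun z => pd Φf j z) i y
      = K * A₁ j * (K * A₁ i * R11 y + K * A₂ i * R12 y)
      + K * A₂ j * (K * A₁ i * R21 y + K * A₂ i * R22 y) := by
    intro j i y
    have e : (fun z => pd Φf j z) = fun z => K * A₁ j * Q1 z + K * A₂ j * Q2 z :=
      funext fun z => hpdΦ j z
    rw [e]
    have d1 : DifferentiableAt ℝ (fun z => K * A₁ j * Q1 z) y := (hdQ1f.const_mul (K * A₁ j)) y
    have d2 : DifferentiableAt ℝ (fun z => K * A₂ j * Q2 z) y := (hdQ2f.const_mul (K * A₂ j)) y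
    rw [pd_add i d1 d2, pd_const_mul i (K * A₁ j) (hdQ1f y), pd_const_mul i (K * A₂ j) (hdQ2f y),
      hpdQ1, hpdQ2]
  have hφfval : ∀ y, φf y = -(cc * K ^ 2) * (R11 y + R22 y) := by
    intro y
    rw [hφfdef, hφpdef, hR11def, hR22def]
  have hSx : ξ 0 * ξ 0 + ξ 1 * ξ 1 + ξ 2 * ξ 2 = 1 := by
    simpa [dot3, Fin.sum_univ_three] using hfξ
  have hN1 : A₁ 0 * A₁ 0 + A₁ 1 * A₁ 1 + A₁ 2 * A₁ 2 = 1 := by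
    simpa [dot3, Fin.sum_univ_three] using hfA1
  have hN2 : A₂ 0 * A₂ 0 + A₂ 1 * A₂ 1 + A₂ 2 * A₂ 2 = 1 := by
    simpa [dot3, Fin.sum_univ_three] using hfA2
  have hT1 : ξ 0 * A₁ 0 + ξ 1 * A₁ 1 + ξ 2 * A₁ 2 = 0 := by
    simpa [dot3, Fin.sum_univ_three] using hfξA1
  have hT2 : ξ 0 * A₂ 0 + ξ 1 * A₂ 1 + ξ 2 * A₂ 2 = 0 := by
    simpa [dot3, Fin.sum_univ_three] using hfξA2
  have hM : A₁ 0 * A₂ 0 + A₁ 1 * A₂ 1 + A₁ 2 * A₂ 2 = 0 := by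
    simpa [dot3, Fin.sum_univ_three] using hfA12
  have hφeq : φξ = φf := by
    funext y
    rw [hφξ y, hΦe]
    simp only [Fin.sum_univ_three]
    simp only [hΦ2]
    rw [hφfval y]
    linear_combination (-(cc * K ^ 2) * R11 y) * hN1 + (-(cc * K ^ 2) * (R12 y + R21 y)) * hM +
      (-(cc * K ^ 2) * R22 y) * hN2
  constructor
  · -- part 1
    intro t x i
    set Ψ : (Fin 3 → ℝ) → ℝ := fun y => ψr (K * (dot3 y ξ + μ * t)) with hΨdef
    set sf : (Fin 3 → ℝ) → ℝ := fun y => K * deriv ψr (K * (dot3 y ξ + μ * t)) with hsfdef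
    set s2 : (Fin 3 → ℝ) → ℝ :=
      fun y => K * (K * deriv (deriv ψr) (K * (dot3 y ξ + μ * t))) with hs2def
    have hψe : ψξ t = Ψ := by funext y; rw [hψξ t y, hΨdef]
    have hdΨ : Differentiable ℝ Ψ := by rw [hΨdef]; exact diff_comp_line hψd K (μ * t) ξ
    have hdsf : Differentiable ℝ sf := by
      rw [hsfdef]; exact diff_comp_line (hψ'd.const_mul K) K (μ * t) ξ
    have hpdΨ : ∀ j y, pd Ψ j y = ξ j * sf y := by
      intro j y
      rw [hΨdef, pd_comp_line hψd K (μ * t) ξ j y]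
      simp only [hsfdef]; ring
    have hpds : ∀ j y, pd sf j y = ξ j * s2 y := by
      intro j y
      have h2 : pd sf j y
          = K * ξ j * deriv (fun r => K * deriv ψr r) (K * (dot3 y ξ + μ * t)) := by
        rw [hsfdef]; exact pd_comp_line (hψ'd.const_mul K) K (μ * t) ξ j y
      rw [h2, deriv_const_mul K (hψ'd _)]
      simp only [hs2def]; ring
    have hpdΦc : ∀ (k : Fin 3) j y, pd (fun z => Φf z * ξ k) j y
        = (K * A₁ j * Q1 y + K * A₂ j * Q2 y) * ξ k := by
      intro k j y
      rw [pd_mul_const j (hdΦf y) (ξ k), hpdΦ]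
    have hpdU : ∀ j y, pd (fun w => Ψ w * Φf w) j y
        = ξ j * (sf y * Φf y) + Ψ y * (K * A₁ j * Q1 y + K * A₂ j * Q2 y) := by
      intro j y
      rw [pd_mul j (hdΨ y) (hdΦf y), hpdΨ, hpdΦ]; ring
    have hdE : ∀ j, Differentiable ℝ (fun z => pd (fun w => Ψ w * Φf w) j z) := by
      intro j
      have e : (fun z => pd (fun w => Ψ w * Φf w) j z)
          = fun z => ξ j * (sf z * Φf z) + Ψ z * (K * A₁ j * Q1 z + K * A₂ j * Q2 z) :=
        funext fun z => hpdU j z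
      rw [e]
      exact ((hdsf.mul hdΦf).const_mul (ξ j)).add
        (hdΨ.mul ((hdQ1f.const_mul (K * A₁ j)).add (hdQ2f.const_mul (K * A₂ j))))
    have hU2 : ∀ j i y, pd (fun z => pd (fun w => Ψ w * Φf w) j z) i y =
        ξ j * (ξ i * (s2 y * Φf y) + sf y * (K * A₁ i * Q1 y + K * A₂ i * Q2 y))
        + (ξ i * (sf y * (K * A₁ j * Q1 y + K * A₂ j * Q2 y))
          + Ψ y * (K * A₁ j * (K * A₁ i * R11 y + K * A₂ i * R12 y)
                 + K * A₂ j * (K * A₁ i * R21 y + K * A₂ i * R22 y))) := by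
      intro j i y
      have e : (fun z => pd (fun w => Ψ w * Φf w) j z)
          = fun z => ξ j * (sf z * Φf z) + Ψ z * (K * A₁ j * Q1 z + K * A₂ j * Q2 z) :=
        funext fun z => hpdU j z
      rw [e]
      have d1 : DifferentiableAt ℝ (fun z => ξ j * (sf z * Φf z)) y :=
        ((hdsf.mul hdΦf).const_mul (ξ j)) y
      have d3 : DifferentiableAt ℝ (fun z => K * A₁ j * Q1 z + K * A₂ j * Q2 z) y :=
        ((hdQ1f.const_mul (K * A₁ j)).add (hdQ2f.const_mul (K * A₂ j))) y
      have d2 : DifferentiableAt ℝ (fun z => Ψ z * (K * A₁ j * Q1 z + K * A₂ j * Q2 z)) y :=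
        (hdΨ y).mul d3
      rw [pd_add i d1 d2, pd_const_mul i (ξ j) (f := fun z => sf z * Φf z) ((hdsf.mul hdΦf) y),
        pd_mul i (hdsf y) (hdΦf y), pd_mul i (hdΨ y) d3,
        pd_add i ((hdQ1f.const_mul (K * A₁ j)) y) ((hdQ2f.const_mul (K * A₂ j)) y),
        pd_const_mul i (K * A₁ j) (hdQ1f y), pd_const_mul i (K * A₂ j) (hdQ2f y),
        hpdΨ, hpds, hpdΦ, hpdQ1, hpdQ2]
      ring
    have eV : ∀ k, (fun z => V t z k) = fun z => cc * ξ k * (Ψ z * Φf z) := by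
      intro k; funext z; rw [hV t z k, hψe, hΦe]; ring
    have hpdV : ∀ k j y, pd (fun z => V t z k) j y
        = cc * ξ k * (ξ j * (sf y * Φf y) + Ψ y * (K * A₁ j * Q1 y + K * A₂ j * Q2 y)) := by
      intro k j y
      rw [eV k, pd_const_mul j (cc * ξ k) (f := fun z => Ψ z * Φf z) ((hdΨ.mul hdΦf) y), hpdU]
    have hcurlVpd : ∀ (k1 j1 k2 j2 a : Fin 3) (y : Fin 3 → ℝ),
        pd (fun z => cc * ξ k1 * (ξ j1 * (sf z * Φf z)
              + Ψ z * (K * A₁ j1 * Q1 z + K * A₂ j1 * Q2 z))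
            - cc * ξ k2 * (ξ j2 * (sf z * Φf z)
              + Ψ z * (K * A₁ j2 * Q1 z + K * A₂ j2 * Q2 z))) a y
          = cc * ξ k1 * pd (fun z => pd (fun w => Ψ w * Φf w) j1 z) a y
          - cc * ξ k2 * pd (fun z => pd (fun w => Ψ w * Φf w) j2 z) a y := by
      intro k1 j1 k2 j2 a y
      have e : (fun z => cc * ξ k1 * (ξ j1 * (sf z * Φf z)
              + Ψ z * (K * A₁ j1 * Q1 z + K * A₂ j1 * Q2 z))
            - cc * ξ k2 * (ξ j2 * (sf z * Φf z)
              + Ψ z * (K * A₁ j2 * Q1 z + K * A₂ j2 * Q2 z)))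
          = fun z => cc * ξ k1 * pd (fun w => Ψ w * Φf w) j1 z
            - cc * ξ k2 * pd (fun w => Ψ w * Φf w) j2 z := by
        funext z; rw [hpdU j1 z, hpdU j2 z]
      rw [e, pd_sub a (((hdE j1).const_mul (cc * ξ k1)) y) (((hdE j2).const_mul (cc * ξ k2)) y),
        pd_const_mul a (cc * ξ k1) ((hdE j1) y), pd_const_mul a (cc * ξ k2) ((hdE j2) y)]
    rw [hWc t x, hW t x i, hψe, hΦe, hφeq]
    fin_cases i
    · simp only [curl3, cross3, Matrix.cons_val_zero, Matrix.cons_val_one, Matrix.head_cons,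
        Matrix.cons_val_two, Matrix.tail_cons, Pi.smul_apply, smul_eq_mul,
        Fin.zero_eta, Fin.mk_one, Fin.reduceFinMk, Fin.isValue]
      simp only [hpdΨ, hpdΦc, hpdV]
      simp only [hcurlVpd, hU2, hφfval]
      linear_combination (-(cc * Ψ x * K ^ 2) * (A₁ 0 * R11 x + A₂ 0 * R21 x)) * hT1 +
        (-(cc * Ψ x * K ^ 2) * (A₁ 0 * R12 x + A₂ 0 * R22 x)) * hT2 +
        (cc * K ^ 2 * Ψ x * ξ 0 * R11 x) * hN1 + (cc * K ^ 2 * Ψ x * ξ 0 * R22 x) * hN2 +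
        (cc * K ^ 2 * Ψ x * ξ 0 * (R12 x + R21 x)) * hM
    · simp only [curl3, cross3, Matrix.cons_val_zero, Matrix.cons_val_one, Matrix.head_cons,
        Matrix.cons_val_two, Matrix.tail_cons, Pi.smul_apply, smul_eq_mul,
        Fin.zero_eta, Fin.mk_one, Fin.reduceFinMk, Fin.isValue]
      simp only [hpdΨ, hpdΦc, hpdV]
      simp only [hcurlVpd, hU2, hφfval]
      linear_combination (-(cc * Ψ x * K ^ 2) * (A₁ 1 * R11 x + A₂ 1 * R21 x)) * hT1 +
        (-(cc * Ψ x * K ^ 2) * (A₁ 1 * R12 x + A₂ 1 * R22 x)) * hT2 +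
        (cc * K ^ 2 * Ψ x * ξ 1 * R11 x) * hN1 + (cc * K ^ 2 * Ψ x * ξ 1 * R22 x) * hN2 +
        (cc * K ^ 2 * Ψ x * ξ 1 * (R12 x + R21 x)) * hM
    · simp only [curl3, cross3, Matrix.cons_val_zero, Matrix.cons_val_one, Matrix.head_cons,
        Matrix.cons_val_two, Matrix.tail_cons, Pi.smul_apply, smul_eq_mul,
        Fin.zero_eta, Fin.mk_one, Fin.reduceFinMk, Fin.isValue]
      simp only [hpdΨ, hpdΦc, hpdV]
      simp only [hcurlVpd, hU2, hφfval]
      linear_combination (-(cc * Ψ x * K ^ 2) * (A₁ 2 * R11 x + A₂ 2 * R21 x)) * hT1 +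
        (-(cc * Ψ x * K ^ 2) * (A₁ 2 * R12 x + A₂ 2 * R22 x)) * hT2 +
        (cc * K ^ 2 * Ψ x * ξ 2 * R11 x) * hN1 + (cc * K ^ 2 * Ψ x * ξ 2 * R22 x) * hN2 +
        (cc * K ^ 2 * Ψ x * ξ 2 * (R12 x + R21 x)) * hM
  · -- part 2
    intro t x
    set Ψ : (Fin 3 → ℝ) → ℝ := fun y => ψr (K * (dot3 y ξ + μ * t)) with hΨdef
    set sf : (Fin 3 → ℝ) → ℝ := fun y => K * deriv ψr (K * (dot3 y ξ + μ * t)) with hsfdef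
    set s2 : (Fin 3 → ℝ) → ℝ :=
      fun y => K * (K * deriv (deriv ψr) (K * (dot3 y ξ + μ * t))) with hs2def
    have hψe : ψξ t = Ψ := by funext y; rw [hψξ t y, hΨdef]
    have hdΨ : Differentiable ℝ Ψ := by rw [hΨdef]; exact diff_comp_line hψd K (μ * t) ξ
    have hdsf : Differentiable ℝ sf := by
      rw [hsfdef]; exact diff_comp_line (hψ'd.const_mul K) K (μ * t) ξ
    have hpdΨ : ∀ j y, pd Ψ j y = ξ j * sf y := by
      intro j y
      rw [hΨdef, pd_comp_line hψd K (μ * t) ξ j y]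
      simp only [hsfdef]; ring
    have hpds : ∀ j y, pd sf j y = ξ j * s2 y := by
      intro j y
      have h2 : pd sf j y
          = K * ξ j * deriv (fun r => K * deriv ψr r) (K * (dot3 y ξ + μ * t)) := by
        rw [hsfdef]; exact pd_comp_line (hψ'd.const_mul K) K (μ * t) ξ j y
      rw [h2, deriv_const_mul K (hψ'd _)]
      simp only [hs2def]; ring
    have hpdΦc : ∀ (k : Fin 3) j y, pd (fun z => Φf z * ξ k) j y
        = (K * A₁ j * Q1 y + K * A₂ j * Q2 y) * ξ k := by
      intro k j y
      rw [pd_mul_const j (hdΦf y) (ξ k), hpdΦ]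
    have hWcval : ∀ y, Wc t y = fun i => cc * cross3 (fun k => ξ k * sf y)
        (cross3 (fun k => K * A₁ k * Q1 y + K * A₂ k * Q2 y) ξ) i := by
      intro y
      rw [hWc t y, hψe, hΦe]
      funext i
      fin_cases i <;>
        simp only [curl3, cross3, Matrix.cons_val_zero, Matrix.cons_val_one, Matrix.head_cons,
          Matrix.cons_val_two, Matrix.tail_cons, Pi.smul_apply, smul_eq_mul,
          Fin.zero_eta, Fin.mk_one, Fin.reduceFinMk, Fin.isValue, hpdΨ, hpdΦc] <;>
        ring
    have eqi : ∀ i, (fun y => W t y i + Wc t y i) = fun y =>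
        ξ i * (Ψ y * φf y)
        + (cc * (K * (A₁ i * (ξ 0 * ξ 0 + ξ 1 * ξ 1 + ξ 2 * ξ 2)
              - ξ i * (ξ 0 * A₁ 0 + ξ 1 * A₁ 1 + ξ 2 * A₁ 2))) * (sf y * Q1 y)
         + cc * (K * (A₂ i * (ξ 0 * ξ 0 + ξ 1 * ξ 1 + ξ 2 * ξ 2)
              - ξ i * (ξ 0 * A₂ 0 + ξ 1 * A₂ 1 + ξ 2 * A₂ 2))) * (sf y * Q2 y)) := by
      intro i
      funext y
      rw [hW t y i, hψe, hφeq, hWcval y]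
      fin_cases i <;>
        (simp only [cross3, Matrix.cons_val_zero, Matrix.cons_val_one, Matrix.head_cons,
          Matrix.cons_val_two, Matrix.tail_cons, Fin.zero_eta, Fin.mk_one, Fin.reduceFinMk,
          Fin.isValue]; ring)
    have hpdGen : ∀ (b c1 c2 : ℝ) (j : Fin 3) (y : Fin 3 → ℝ),
        pd (fun z => b * (Ψ z * φf z) + (c1 * (sf z * Q1 z) + c2 * (sf z * Q2 z))) j y =
        b * (ξ j * (sf y * φf y) + Ψ y * (K * A₁ j * f1 y + K * A₂ j * f2 y))
        + (c1 * (ξ j * (s2 y * Q1 y) + sf y * (K * A₁ j * R11 y + K * A₂ j * R12 y))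
         + c2 * (ξ j * (s2 y * Q2 y) + sf y * (K * A₁ j * R21 y + K * A₂ j * R22 y))) := by
      intro b c1 c2 j y
      have dA : DifferentiableAt ℝ (fun z => b * (Ψ z * φf z)) y :=
        ((hdΨ.mul hdφf).const_mul b) y
      have dC : DifferentiableAt ℝ (fun z => c1 * (sf z * Q1 z)) y :=
        ((hdsf.mul hdQ1f).const_mul c1) y
      have dD : DifferentiableAt ℝ (fun z => c2 * (sf z * Q2 z)) y :=
        ((hdsf.mul hdQ2f).const_mul c2) y
      have dB : DifferentiableAt ℝ (fun z => c1 * (sf z * Q1 z) + c2 * (sf z * Q2 z)) y :=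
        dC.add dD
      rw [pd_add j dA dB, pd_const_mul j b (f := fun z => Ψ z * φf z) ((hdΨ.mul hdφf) y), pd_add j dC dD,
        pd_const_mul j c1 (f := fun z => sf z * Q1 z) ((hdsf.mul hdQ1f) y),
        pd_const_mul j c2 (f := fun z => sf z * Q2 z) ((hdsf.mul hdQ2f) y),
        pd_mul j (hdΨ y) (hdφf y), pd_mul j (hdsf y) (hdQ1f y), pd_mul j (hdsf y) (hdQ2f y),
        hpdΨ, hpds, hpdφf, hpdQ1, hpdQ2]
      ring
    simp only [Fin.sum_univ_three]
    rw [eqi 0, eqi 1, eqi 2, hpdGen, hpdGen, hpdGen]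
    simp only [hφfval]
    linear_combination
      (Ψ x * K * f1 x - cc * K ^ 2 * sf x * (R11 x * (ξ 0 * A₁ 0 + ξ 1 * A₁ 1 + ξ 2 * A₁ 2)
        + (R12 x + R21 x) * (ξ 0 * A₂ 0 + ξ 1 * A₂ 1 + ξ 2 * A₂ 2))) * hT1 +
      (Ψ x * K * f2 x - cc * K ^ 2 * sf x * R22 x * (ξ 0 * A₂ 0 + ξ 1 * A₂ 1 + ξ 2 * A₂ 2)) * hT2 +
      (cc * K ^ 2 * sf x * R11 x * (ξ 0 * ξ 0 + ξ 1 * ξ 1 + ξ 2 * ξ 2)) * hN1 +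
      (cc * K ^ 2 * sf x * R22 x * (ξ 0 * ξ 0 + ξ 1 * ξ 1 + ξ 2 * ξ 2)) * hN2 +
      (cc * K ^ 2 * sf x * (R12 x + R21 x) * (ξ 0 * ξ 0 + ξ 1 * ξ 1 + ξ 2 * ξ 2)) * hM
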